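/- A point X ∈ ℝ^{N×D} is an equilibrium of the consensus system dX^n = −λ(X^n − ν_f^α(X)) dt (i.e., X^n = ν_f^α(X) for all n) if and only if X^1 = X^2 = … = X^N. -/
import Mathlib


/-- `X` is an equilibrium of the consensus dynamics, i.e. `X^n = ν_f^α(X)` for
all `n`, if and only if all particles coincide: `X^1 = ⋯ = X^N`. -/
theorem stmt_9 (N D : ℕ) (hN : 1 ≤ N) (lam alpha : ℝ) (hlam : 0 < lam)
    (halpha : 0 < alpha) (f : (Fin D → ℝ) → ℝ) (X : Fin N → Fin D → ℝ)
    (ν : Fin D → ℝ)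
    (hν : ν = ∑ m, (Real.exp (-alpha * f (X m)) / ∑ k, Real.exp (-alpha * f (X k))) • X m) :
    (∀ n, X n = ν) ↔ (∀ n m, X n = X m) := by
  constructor
  · intro h n m
    rw [h n, h m]
  · intro h n
    haveI : NeZero N := ⟨by omega⟩
    have hden : (0:ℝ) < ∑ k, Real.exp (-alpha * f (X k)) :=
      Finset.sum_pos (fun k _ => Real.exp_pos _) ⟨0, Finset.mem_univ 0⟩
    have hX : ∀ m : Fin N, X m = X n := fun m => h m n
    rw [hν]
    have : ∀ m : Fin N,
        (Real.exp (-alpha * f (X m)) / ∑ k, Real.exp (-alpha * f (X k))) • X m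
        = (Real.exp (-alpha * f (X m)) / ∑ k, Real.exp (-alpha * f (X k))) • X n := by
      intro m; rw [hX m]
    rw [Finset.sum_congr rfl (fun m _ => this m), ← Finset.sum_smul]
    rw [← Finset.sum_div, div_self hden.ne', one_smul]
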